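/- Let G_P be a discrete induced subgraph of a unit distance graph G(ℝⁿ,‖·‖_P) and G̃ a graph on the same vertex set V such that any two vertices at G̃-distance 2 are at polytope distance 1 (Property D). Then any A ⊆ V avoiding polytope distance 1 decomposes as a union of G̃-cliques whose closed G̃-neighborhoods are pairwise disjoint. -/

import Mathlib

/-!
Property D forbids two points of `A` from having a common neighbour unless they are adjacent,
so on `A` the relation "equal or adjacent" is transitive even through a vertex outside `A`.
Its classes are the required cliques, and a vertex in the closed neighbourhoods of two classes
would make them related, hence equal.
-/

open Set

namespace SimpleGraph

variable {α : Type*} {G : SimpleGraph α} {S : Set α}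

lemma dist_eq_two_of_adj_of_adj {x y z : α} (hxy : G.Adj x y) (hyz : G.Adj y z) (hxz : x ≠ z)
    (hnadj : ¬ G.Adj x z) : G.dist x z = 2 := by
  rw [dist, G.edist_eq_two_iff.mpr
    ⟨hxz, hnadj, y, G.mem_commonNeighbors.mpr ⟨hxy, hyz.symm⟩⟩]
  rfl

lemma eq_or_adj_symm {x y : α} (h : x = y ∨ G.Adj x y) : y = x ∨ G.Adj y x :=
  h.imp Eq.symm Adj.symm

lemma eq_or_adj_trans_of_dist_ne_two (hS : ∀ x ∈ S, ∀ y ∈ S, G.dist x y ≠ 2)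
    {x y z : α} (hx : x ∈ S) (hz : z ∈ S) (hxy : x = y ∨ G.Adj x y)
    (hyz : y = z ∨ G.Adj y z) :
    x = z ∨ G.Adj x z := by
  rcases hxy with rfl | hxy
  · exact hyz
  rcases hyz with rfl | hyz
  · exact .inr hxy
  by_contra! h
  exact hS x hx z hz (dist_eq_two_of_adj_of_adj hxy hyz h.1 h.2)

variable (G) in
def closedNbhd (C : Set α) : Set α := C ∪ {v | ∃ c ∈ C, G.Adj v c}

lemma mem_closedNbhd {C : Set α} {v : α} :
    v ∈ G.closedNbhd C ↔ ∃ c ∈ C, v = c ∨ G.Adj v c := by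
  constructor
  · rintro (hv | ⟨c, hc, hvc⟩)
    exacts [⟨v, hv, .inl rfl⟩, ⟨c, hc, .inr hvc⟩]
  · rintro ⟨c, hc, rfl | hvc⟩
    exacts [.inl hc, .inr ⟨c, hc, hvc⟩]

variable (G) in
def cluster (S : Set α) (a : α) : Set α := {x ∈ S | a = x ∨ G.Adj a x}

lemma self_mem_cluster {a : α} (ha : a ∈ S) : a ∈ G.cluster S a := ⟨ha, .inl rfl⟩

lemma cluster_eq_of_mem_cluster (hS : ∀ x ∈ S, ∀ y ∈ S, G.dist x y ≠ 2) {a b : α}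
    (ha : a ∈ S) (hb : b ∈ G.cluster S a) : G.cluster S b = G.cluster S a := by
  ext x
  constructor
  · rintro ⟨hx, hbx⟩
    exact ⟨hx, eq_or_adj_trans_of_dist_ne_two hS ha hx hb.2 hbx⟩
  · rintro ⟨hx, hax⟩
    exact ⟨hx, eq_or_adj_trans_of_dist_ne_two hS hb.1 hx (eq_or_adj_symm hb.2) hax⟩

lemma isClique_cluster (hS : ∀ x ∈ S, ∀ y ∈ S, G.dist x y ≠ 2) (a : α) :
    G.IsClique (G.cluster S a) := by
  intro x hx y hy hxy
  exact (eq_or_adj_trans_of_dist_ne_two hS hx.1 hy.1 (eq_or_adj_symm hx.2) hy.2).resolve_left hxy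

lemma disjoint_closedNbhd_cluster (hS : ∀ x ∈ S, ∀ y ∈ S, G.dist x y ≠ 2) {a b : α}
    (ha : a ∈ S) (hb : b ∈ S) (hab : G.cluster S a ≠ G.cluster S b) :
    Disjoint (G.closedNbhd (G.cluster S a)) (G.closedNbhd (G.cluster S b)) := by
  refine Set.disjoint_left.mpr fun v hva hvb ↦ hab ?_
  obtain ⟨p, hp, hvp⟩ := mem_closedNbhd.mp hva
  obtain ⟨q, hq, hvq⟩ := mem_closedNbhd.mp hvb
  have hpq : q ∈ G.cluster S p :=
    ⟨hq.1, eq_or_adj_trans_of_dist_ne_two hS hp.1 hq.1 (eq_or_adj_symm hvp) hvq⟩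
  calc G.cluster S a = G.cluster S p := (cluster_eq_of_mem_cluster hS ha hp).symm
    _ = G.cluster S q := (cluster_eq_of_mem_cluster hS hp.1 hpq).symm
    _ = G.cluster S b := cluster_eq_of_mem_cluster hS hb hq

theorem exists_cliques_sUnion_eq_pairwise_disjoint_closedNbhd
    (hS : ∀ x ∈ S, ∀ y ∈ S, G.dist x y ≠ 2) :
    ∃ 𝒞 : Set (Set α), ⋃₀ 𝒞 = S ∧ (∀ C ∈ 𝒞, G.IsClique C) ∧
      𝒞.Pairwise fun C C' ↦ Disjoint (G.closedNbhd C) (G.closedNbhd C') := by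
  refine ⟨G.cluster S '' S, ?_, ?_, ?_⟩
  · refine subset_antisymm (sUnion_subset ?_) fun a ha ↦
      ⟨_, mem_image_of_mem _ ha, self_mem_cluster ha⟩
    rintro _ ⟨a, -, rfl⟩ x hx
    exact hx.1
  · rintro _ ⟨a, -, rfl⟩
    exact isClique_cluster hS a
  · rintro _ ⟨a, ha, rfl⟩ _ ⟨b, hb, rfl⟩ hab
    exact disjoint_closedNbhd_cluster hS ha hb hab

end SimpleGraph

theorem avoiding_set_decomposes_into_cliques (n : ℕ)
    (Nf : (Fin n → ℝ) → ℝ) (V : Set (Fin n → ℝ))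
    (Gt : SimpleGraph V)
    (hD : ∀ u v : V, Gt.dist u v = 2 → Nf ((u : Fin n → ℝ) - (v : Fin n → ℝ)) = 1)
    (A : Set V) (hA : ∀ x ∈ A, ∀ y ∈ A, Nf ((x : Fin n → ℝ) - (y : Fin n → ℝ)) ≠ 1) :
    ∃ 𝒞 : Set (Set V), ⋃₀ 𝒞 = A ∧ (∀ C ∈ 𝒞, Gt.IsClique C) ∧
      𝒞.Pairwise fun C C' =>
        Disjoint (C ∪ {v : V | ∃ c ∈ C, Gt.Adj v c})
          (C' ∪ {v : V | ∃ c ∈ C', Gt.Adj v c}) :=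
  SimpleGraph.exists_cliques_sUnion_eq_pairwise_disjoint_closedNbhd
    fun x hx y hy h ↦ hA x hx y hy (hD x y h)
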